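/- arXiv:1602.01514 — 2 statements merged into one kernel-verified Lean document; each statement's English description precedes it below -/
import Mathlib

section
/- The polynomial Δ = (A₁C₂ − A₂C₁)² + (B₂C₁ − C₂B₁)(A₁B₂ − A₂B₁) in six variables A₁, B₁, C₁, A₂, B₂, C₂ over an algebraically closed field (or over ℚ) is irreducible. -/
/-!
Splitting off `A₁`, `Δ` is the quadratic `C₂² A₁² + b A₁ + c` over the UFD
`R = ℚ[B₁, C₁, A₂, B₂, C₂]`. Since `C₂` is prime and does not divide `c`, this quadratic is
primitive, so by Gauss's lemma it suffices to show it has no root in `Frac R`, i.e. that its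
discriminant `(B₂C₁ − C₂B₁)² (B₂² − 4A₂C₂)` is not a square there. As `R` is integrally closed,
that would make `B₂² − 4A₂C₂` a square in `R`; specialising `B₂ = 0`, `C₂ = 1` it would make the
linear polynomial `−4A₂` a square.
-/

open MvPolynomial

theorem IsIntegrallyClosed.isSquare_of_isSquare_algebraMap {R K : Type*} [CommRing R] [Field K]
    [Algebra R K] [IsFractionRing R K] [IsIntegrallyClosed R] {g : R}
    (h : IsSquare (algebraMap R K g)) : IsSquare g := by
  obtain ⟨s, hs⟩ := h
  have hint : IsIntegral R (s ^ 2) := by rw [sq, ← hs]; exact isIntegral_algebraMap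
  obtain ⟨y, hy⟩ := IsIntegrallyClosed.exists_algebraMap_eq_of_isIntegral_pow two_pos hint
  refine ⟨y, IsFractionRing.injective R K ?_⟩
  rw [hs, map_mul, hy]

namespace Polynomial

theorem irreducible_quadratic_of_discrim_ne_sq {K : Type*} [Field K] {a b c : K} (ha : a ≠ 0)
    (h : ∀ s : K, discrim a b c ≠ s ^ 2) : Irreducible (C a * X ^ 2 + C b * X + C c) := by
  refine irreducible_of_degree_le_three_of_not_isRoot (by simp [natDegree_quadratic ha])
    fun x hx ↦ quadratic_ne_zero_of_discrim_ne_sq h x ?_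
  simpa [IsRoot, sq] using hx

theorem isPrimitive_quadratic_of_isRelPrime {R : Type*} [CommRing R] {a b c : R}
    (hac : IsRelPrime a c) : (C a * X ^ 2 + C b * X + C c).IsPrimitive := by
  refine isPrimitive_iff_isUnit_of_C_dvd.mpr fun r hr ↦ hac ?_ ?_
  · simpa using (C_dvd_iff_dvd_coeff r _).mp hr 2
  · simpa using (C_dvd_iff_dvd_coeff r _).mp hr 0

theorem irreducible_quadratic_of_discrim_eq_sq_mul {R : Type*} [CommRing R] [IsDomain R]
    [IsGCDMonoid R] {a b c e g : R} (ha : a ≠ 0) (hac : IsRelPrime a c) (he : e ≠ 0)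
    (hg : ¬IsSquare g) (hdisc : discrim a b c = e ^ 2 * g) :
    Irreducible (C a * X ^ 2 + C b * X + C c) := by
  let K := FractionRing R
  let f := algebraMap R K
  have hf : Function.Injective f := IsFractionRing.injective R K
  rw [(isPrimitive_quadratic_of_isRelPrime hac).irreducible_iff_irreducible_map_fraction_map
    (K := K)]
  simp only [Polynomial.map_add, Polynomial.map_mul, Polynomial.map_pow, map_C, map_X]
  refine irreducible_quadratic_of_discrim_ne_sq ((map_ne_zero_iff f hf).mpr ha) fun s hs ↦ hg ?_
  have hfe : f e ≠ 0 := (map_ne_zero_iff f hf).mpr he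
  have hmap : discrim (f a) (f b) (f c) = f (discrim a b c) := by
    simp only [discrim, map_sub, map_mul, map_pow, map_ofNat]
  rw [hmap, hdisc, map_mul, map_pow] at hs
  refine IsIntegrallyClosed.isSquare_of_isSquare_algebraMap (K := K) ⟨s / f e, ?_⟩
  rw [div_mul_div_comm, eq_div_iff (mul_ne_zero hfe hfe)]
  linear_combination hs

end Polynomial

section

local notation "B₁" => (X 0 : MvPolynomial (Fin 5) ℚ)
local notation "C₁" => (X 1 : MvPolynomial (Fin 5) ℚ)
local notation "A₂" => (X 2 : MvPolynomial (Fin 5) ℚ)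
local notation "B₂" => (X 3 : MvPolynomial (Fin 5) ℚ)
local notation "C₂" => (X 4 : MvPolynomial (Fin 5) ℚ)

theorem finSuccEquiv_resultant :
    finSuccEquiv ℚ 5
        ((X 0 * X 5 - X 3 * X 2) ^ 2 + (X 4 * X 2 - X 5 * X 1) * (X 0 * X 4 - X 3 * X 1)) =
      Polynomial.C (C₂ ^ 2) * Polynomial.X ^ 2
        + Polynomial.C (B₂ * (B₂ * C₁ - C₂ * B₁) - 2 * A₂ * C₁ * C₂) * Polynomial.X
        + Polynomial.C (A₂ ^ 2 * C₁ ^ 2 - A₂ * B₁ * (B₂ * C₁ - C₂ * B₁)) := by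
  rw [show (1 : Fin 6) = Fin.succ 0 from rfl, show (2 : Fin 6) = Fin.succ 1 from rfl,
    show (3 : Fin 6) = Fin.succ 2 from rfl, show (4 : Fin 6) = Fin.succ 3 from rfl,
    show (5 : Fin 6) = Fin.succ 4 from rfl]
  simp only [map_add, map_sub, map_mul, map_pow, finSuccEquiv_X_zero, finSuccEquiv_X_succ,
    Polynomial.C_ofNat]
  ring

theorem isRelPrime_C₂_sq :
    IsRelPrime (C₂ ^ 2) (A₂ ^ 2 * C₁ ^ 2 - A₂ * B₁ * (B₂ * C₁ - C₂ * B₁)) := by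
  refine (X_prime.irreducible.isRelPrime_iff_not_dvd.mpr ?_).pow_left
  rintro ⟨d, hd⟩
  simpa using congrArg (eval ![0, 1, 1, 0, 0]) hd

theorem B₂_mul_C₁_sub_C₂_mul_B₁_ne_zero : B₂ * C₁ - C₂ * B₁ ≠ 0 := by
  intro h
  simpa using congrArg (eval ![0, 1, 0, 1, 0]) h

theorem not_isSquare_B₂_sq_sub_four_mul_A₂_mul_C₂ : ¬IsSquare (B₂ ^ 2 - 4 * A₂ * C₂) := by
  intro h
  have hspec := h.map (aeval (R := ℚ) (![0, 0, Polynomial.X, 0, 1] : Fin 5 → Polynomial ℚ))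
  simp only [map_sub, map_mul, map_pow, map_ofNat, aeval_X, Matrix.cons_val, ne_eq,
    OfNat.ofNat_ne_zero, not_false_eq_true, zero_pow, mul_one, zero_sub] at hspec
  exact (Polynomial.irreducible_of_degree_eq_one (by compute_degree!)).not_isSquare hspec

end

/-- The polynomial
`Δ = (A₁C₂ − A₂C₁)² + (B₂C₁ − C₂B₁)(A₁B₂ − A₂B₁)` in the six variables
`A₁, B₁, C₁, A₂, B₂, C₂` (here `X 0, X 1, X 2, X 3, X 4, X 5`) over `ℚ`
is irreducible. -/
theorem stmt4 :
    Irreducible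
      ((X 0 * X 5 - X 3 * X 2) ^ 2 + (X 4 * X 2 - X 5 * X 1) * (X 0 * X 4 - X 3 * X 1) :
        MvPolynomial (Fin 6) ℚ) := by
  rw [← MulEquiv.irreducible_iff (finSuccEquiv ℚ 5), finSuccEquiv_resultant]
  refine Polynomial.irreducible_quadratic_of_discrim_eq_sq_mul (pow_ne_zero 2 (X_ne_zero 4))
    isRelPrime_C₂_sq B₂_mul_C₁_sub_C₂_mul_B₁_ne_zero not_isSquare_B₂_sq_sub_four_mul_A₂_mul_C₂ ?_
  rw [discrim]
  ring
end

section
/- Let δ₁, δ₂ ∈ k[u₀,u₁,v₀,v₁] be bihomogeneous of bidegree (2,3) and δ₃ bihomogeneous of bidegree (4,1), over an algebraically closed field k. Suppose δ₃ vanishes at none of the common zeros of δ₁ and δ₂ in P¹ × P¹, and the 12 common zeros of δ₁, δ₂ are distinct with pairwise distinct second coordinates (v₀ : v₁). If P₁, P₂ are bihomogeneous of bidegree (2,0), P₃ bihomogeneous of bidegree (0,2), and P₁δ₁ + P₂δ₂ + P₃δ₃ = 0, then P₁ = P₂ = P₃ = 0. -/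
/-!
At each of the twelve points δ₁ = δ₂ = 0 ≠ δ₃, so P₃ vanishes there; as P₃ is a binary quadratic
form in `v` alone and the `v`-coordinates are pairwise non-proportional, P₃ = 0. Now
P₁δ₁ + P₂δ₂ = 0. Only finitely many `u = (t : 1)` carry a common zero of δ₁ and δ₂, whereas over
every `u` the binary cubic δ₁(u, ·) has a zero `v`; for all other `t` this forces δ₂(u, v) ≠ 0,
hence P₂(u) = 0 for infinitely many points `u` of ℙ¹, and P₂ = 0. The same count shows δ₁ ≠ 0,
whence P₁ = 0.
-/

open MvPolynomial

theorem MvPolynomial.IsWeightedHomogeneous.bind₁ {σ τ M N R : Type*} [CommSemiring R]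
    [AddCommMonoid M] [AddCommMonoid N] {w : σ → M} {w' : τ → N} {P : MvPolynomial σ R} {m : M}
    (hP : P.IsWeightedHomogeneous w m) (φ : M →+ N) (g : σ → MvPolynomial τ R)
    (hg : ∀ i, (g i).IsWeightedHomogeneous w' (φ (w i))) :
    (bind₁ g P).IsWeightedHomogeneous w' (φ m) := by
  rw [P.as_sum, map_sum]
  refine IsWeightedHomogeneous.sum _ _ _ fun d hd => ?_
  rw [bind₁_monomial, ← hP (mem_support_iff.mp hd), Finsupp.weight_apply, map_finsuppSum]
  simp only [map_nsmul]
  exact (IsWeightedHomogeneous.prod _ _ _ fun i _ => (hg i).pow (d i)).C_mul _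

theorem MvPolynomial.IsHomogeneous.eval_eq_constantCoeff {σ R : Type*} [CommSemiring R]
    {q : MvPolynomial σ R} (hq : q.IsHomogeneous 0) (x : σ → R) : eval x q = constantCoeff q := by
  rw [totalDegree_eq_zero_iff_eq_C.mp ((totalDegree_zero_iff_isHomogeneous σ).mpr hq)]
  simp

theorem Polynomial.eval_one_zero_homogenize {R : Type*} [CommSemiring R] (p : Polynomial R)
    (n : ℕ) : MvPolynomial.eval ![1, 0] (p.homogenize n) = p.coeff n := by
  simp only [homogenize, map_sum, MvPolynomial.eval_monomial,
    Finset.Nat.sum_antidiagonal_eq_sum_range_succ_mk]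
  rw [Finset.sum_eq_single_of_mem n (Finset.self_mem_range_succ n)]
  · simp
  · intro j hj hne
    simp [zero_pow (show n - j ≠ 0 by grind), Finsupp.prod_fintype]

namespace MvPolynomial.IsHomogeneous

theorem exists_homogenize_eq {R : Type*} [CommRing R] {q : MvPolynomial (Fin 2) R} {n : ℕ}
    (hq : q.IsHomogeneous n) : ∃ p : Polynomial R, p.natDegree ≤ n ∧ p.homogenize n = q := by
  refine ⟨MvPolynomial.aeval ![Polynomial.X, 1] q, ?_,
    Polynomial.homogenize_eq_of_isHomogeneous hq rfl⟩
  rw [q.as_sum, map_sum]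
  refine Polynomial.natDegree_sum_le_of_forall_le _ _ fun m hm => ?_
  have hm : m 0 + m 1 = n := by
    simpa [Finsupp.weight_apply, Finsupp.sum_fintype] using hq (mem_support_iff.mp hm)
  rw [aeval_monomial, Finsupp.prod_fintype _ _ (fun _ => pow_zero _), Fin.prod_univ_two]
  simp only [Matrix.cons_val_zero, Matrix.cons_val_one, one_pow, mul_one,
    Polynomial.algebraMap_eq]
  exact (Polynomial.natDegree_C_mul_X_pow_le _ _).trans (by omega)

variable {K : Type*} [Field K] {q : MvPolynomial (Fin 2) K} {n : ℕ}

theorem exists_eval_eq_zero [IsAlgClosed K] (hq : q.IsHomogeneous n) (hn : n ≠ 0) :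
    ∃ x : K × K, x ≠ 0 ∧ eval ![x.1, x.2] q = 0 := by
  obtain ⟨p, hpn, rfl⟩ := hq.exists_homogenize_eq
  by_cases hdeg : p.natDegree = n
  · have hp : p.degree ≠ 0 := (Polynomial.natDegree_pos_iff_degree_pos.mp (by omega)).ne'
    obtain ⟨s, hs⟩ := IsAlgClosed.exists_root p hp
    refine ⟨(s, 1), by simp, ?_⟩
    rw [Polynomial.eval_homogenize hpn _ (by simp)]
    simpa using hs
  · refine ⟨(1, 0), by simp, ?_⟩
    rw [Polynomial.eval_one_zero_homogenize]
    exact Polynomial.coeff_eq_zero_of_natDegree_lt (by omega)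

theorem eq_zero_of_eval_eq_zero {ι : Type*} [Fintype ι] (hq : q.IsHomogeneous n) (x : ι → K × K)
    (hx : Pairwise fun i j => (x i).1 * (x j).2 ≠ (x j).1 * (x i).2)
    (hcard : n + 1 < Fintype.card ι) (h0 : ∀ i, eval ![(x i).1, (x i).2] q = 0) : q = 0 := by
  classical
  obtain ⟨p, hpn, rfl⟩ := hq.exists_homogenize_eq
  let s := Finset.univ.filter fun i => (x i).2 ≠ 0
  -- at most one point lies at infinity; the others give more than `n` distinct roots of `p`
  have hs : n < s.card := by
    have hinf : (Finset.univ.filter fun i => (x i).2 = 0).card ≤ 1 :=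
      Finset.card_le_one.mpr fun i hi j hj => by_contra fun hij => hx hij (by simp_all)
    have hsplit := Finset.card_filter_add_card_filter_not (s := Finset.univ) fun i => (x i).2 = 0
    simp only [Finset.card_univ] at hsplit
    change _ + s.card = _ at hsplit
    omega
  have hinj : Set.InjOn (fun i => (x i).1 / (x i).2) s := fun i hi j hj hij => by
    by_contra hne
    exact hx hne ((div_eq_div_iff (Finset.mem_filter.mp hi).2 (Finset.mem_filter.mp hj).2).mp hij)
  suffices p = 0 by simp [this]
  refine Polynomial.eq_zero_of_natDegree_lt_card_of_eval_eq_zero' p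
    (s.image fun i => (x i).1 / (x i).2) ?_
    (by rw [Finset.card_image_of_injOn hinj]; exact hpn.trans_lt hs)
  simp only [Finset.mem_image]
  rintro _ ⟨i, hi, rfl⟩
  have hi : (x i).2 ≠ 0 := (Finset.mem_filter.mp hi).2
  have hxi := h0 i
  rw [Polynomial.eval_homogenize hpn _ (by simpa using hi)] at hxi
  simpa [hi] using hxi

end MvPolynomial.IsHomogeneous

namespace Bihomogeneous

def weight : Fin 4 → ℕ × ℕ := ![(1, 0), (1, 0), (0, 1), (0, 1)]

variable {K : Type*} [Field K] {P : MvPolynomial (Fin 4) K}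

noncomputable def vFiber (P : MvPolynomial (Fin 4) K) (u : K × K) : MvPolynomial (Fin 2) K :=
  bind₁ ![C u.1, C u.2, X 0, X 1] P

noncomputable def uFiber (P : MvPolynomial (Fin 4) K) (v : K × K) : MvPolynomial (Fin 2) K :=
  bind₁ ![X 0, X 1, C v.1, C v.2] P

theorem eval_vFiber (P : MvPolynomial (Fin 4) K) (u v : K × K) :
    eval ![v.1, v.2] (vFiber P u) = eval ![u.1, u.2, v.1, v.2] P := by
  have : (fun i => eval ![v.1, v.2] (![C u.1, C u.2, X 0, X 1] i)) = ![u.1, u.2, v.1, v.2] := by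
    funext i
    fin_cases i <;> simp
  rw [vFiber, eval, eval₂Hom_bind₁]
  exact congrArg (eval · P) this

theorem eval_uFiber (P : MvPolynomial (Fin 4) K) (u v : K × K) :
    eval ![u.1, u.2] (uFiber P v) = eval ![u.1, u.2, v.1, v.2] P := by
  have : (fun i => eval ![u.1, u.2] (![X 0, X 1, C v.1, C v.2] i)) = ![u.1, u.2, v.1, v.2] := by
    funext i
    fin_cases i <;> simp
  rw [uFiber, eval, eval₂Hom_bind₁]
  exact congrArg (eval · P) this

theorem isHomogeneous_vFiber {a b : ℕ} (hP : P.IsWeightedHomogeneous weight (a, b))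
    (u : K × K) : (vFiber P u).IsHomogeneous b :=
  hP.bind₁ (AddMonoidHom.snd ℕ ℕ) _ fun i => by
    fin_cases i <;> simp [weight, isWeightedHomogeneous_C] <;> exact isHomogeneous_X K _

theorem isHomogeneous_uFiber {a b : ℕ} (hP : P.IsWeightedHomogeneous weight (a, b))
    (v : K × K) : (uFiber P v).IsHomogeneous a :=
  hP.bind₁ (AddMonoidHom.fst ℕ ℕ) _ fun i => by
    fin_cases i <;> simp [weight, isWeightedHomogeneous_C] <;> exact isHomogeneous_X K _

theorem eval_eq_of_uDegree_zero {b : ℕ} (hP : P.IsWeightedHomogeneous weight (0, b))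
    (u u' v : K × K) : eval ![u.1, u.2, v.1, v.2] P = eval ![u'.1, u'.2, v.1, v.2] P := by
  simp only [← eval_uFiber, (isHomogeneous_uFiber hP v).eval_eq_constantCoeff]

theorem eval_eq_of_vDegree_zero {a : ℕ} (hP : P.IsWeightedHomogeneous weight (a, 0))
    (u v v' : K × K) : eval ![u.1, u.2, v.1, v.2] P = eval ![u.1, u.2, v'.1, v'.2] P := by
  simp only [← eval_vFiber, (isHomogeneous_vFiber hP u).eval_eq_constantCoeff]

theorem eq_zero_of_forall_eval_eq_zero [Infinite K]
    (h : ∀ u v : K × K, eval ![u.1, u.2, v.1, v.2] P = 0) : P = 0 := by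
  refine MvPolynomial.funext fun x => ?_
  have hx : x = ![x 0, x 1, x 2, x 3] := by
    funext i
    fin_cases i <;> rfl
  rw [hx, map_zero]
  exact h (x 0, x 1) (x 2, x 3)

variable [Infinite K] {ι : Type*} [Fintype ι]

theorem eq_zero_of_uDegree_zero {b : ℕ} (hP : P.IsWeightedHomogeneous weight (0, b))
    (v : ι → K × K) (hv : Pairwise fun i j => (v i).1 * (v j).2 ≠ (v j).1 * (v i).2)
    (hcard : b + 1 < Fintype.card ι)
    (h0 : ∀ i, ∃ u : K × K, eval ![u.1, u.2, (v i).1, (v i).2] P = 0) : P = 0 := by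
  refine eq_zero_of_forall_eval_eq_zero fun u v' => ?_
  have hfiber : vFiber P u = 0 :=
    (isHomogeneous_vFiber hP u).eq_zero_of_eval_eq_zero v hv hcard fun i => by
      obtain ⟨u', hu'⟩ := h0 i
      rw [eval_vFiber, eval_eq_of_uDegree_zero hP u u', hu']
  rw [← eval_vFiber, hfiber, map_zero]

theorem eq_zero_of_vDegree_zero {a : ℕ} (hP : P.IsWeightedHomogeneous weight (a, 0))
    (u : ι → K × K) (hu : Pairwise fun i j => (u i).1 * (u j).2 ≠ (u j).1 * (u i).2)
    (hcard : a + 1 < Fintype.card ι)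
    (h0 : ∀ i, ∃ v : K × K, eval ![(u i).1, (u i).2, v.1, v.2] P = 0) : P = 0 := by
  refine eq_zero_of_forall_eval_eq_zero fun u' v => ?_
  have hfiber : uFiber P v = 0 :=
    (isHomogeneous_uFiber hP v).eq_zero_of_eval_eq_zero u hu hcard fun i => by
      obtain ⟨v', hv'⟩ := h0 i
      rw [eval_uFiber, eval_eq_of_vDegree_zero hP _ v v', hv']
  rw [← eval_uFiber, hfiber, map_zero]

end Bihomogeneous

open Bihomogeneous

theorem finite_of_forall_exists_eq_smul {K ι : Type*} [Field K] [Finite ι] (u : ι → K × K)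
    {S : Set K} (hS : ∀ t ∈ S, ∃ i, ∃ c : K, ((t, 1) : K × K) = c • u i) : S.Finite :=
  (Set.finite_range fun i => (u i).1 / (u i).2).subset fun t ht => by
    obtain ⟨i, c, h⟩ := hS t ht
    simp only [Prod.ext_iff, Prod.smul_fst, Prod.smul_snd, smul_eq_mul] at h
    have hu : (u i).2 ≠ 0 := by
      rintro h0
      simp [h0] at h
    refine ⟨i, ?_⟩
    simp only [div_eq_iff hu, h.1]
    linear_combination (u i).1 * h.2

theorem stmt15_general {k : Type*} [Field k] [IsAlgClosed k]
    (w : Fin 4 → ℕ × ℕ) (hw : w = ![(1,0), (1,0), (0,1), (0,1)])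
    (δ₁ δ₂ δ₃ : MvPolynomial (Fin 4) k)
    (hδ₁ : δ₁.IsWeightedHomogeneous w (2,3))
    (hδ₂ : δ₂.IsWeightedHomogeneous w (2,3))
    (z : Fin 12 → (k × k) × (k × k))
    (hz_zero : ∀ i,
      eval ![(z i).1.1, (z i).1.2, (z i).2.1, (z i).2.2] δ₁ = 0 ∧
      eval ![(z i).1.1, (z i).1.2, (z i).2.1, (z i).2.2] δ₂ = 0)
    (hz_v_distinct : ∀ i j, i ≠ j →
      (z i).2.1 * (z j).2.2 ≠ (z j).2.1 * (z i).2.2)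
    (hz_all : ∀ p : (k × k) × (k × k), p.1 ≠ (0, 0) → p.2 ≠ (0, 0) →
      eval ![p.1.1, p.1.2, p.2.1, p.2.2] δ₁ = 0 →
      eval ![p.1.1, p.1.2, p.2.1, p.2.2] δ₂ = 0 →
      ∃ i, (∃ c : k, c ≠ 0 ∧ p.1 = c • (z i).1) ∧ ∃ d : k, d ≠ 0 ∧ p.2 = d • (z i).2)
    (hδ₃_ne : ∀ i, eval ![(z i).1.1, (z i).1.2, (z i).2.1, (z i).2.2] δ₃ ≠ 0)
    (P₁ P₂ P₃ : MvPolynomial (Fin 4) k)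
    (hP₂ : P₂.IsWeightedHomogeneous w (2,0))
    (hP₃ : P₃.IsWeightedHomogeneous w (0,2))
    (hrel : P₁ * δ₁ + P₂ * δ₂ + P₃ * δ₃ = 0) :
    P₁ = 0 ∧ P₂ = 0 ∧ P₃ = 0 := by
  subst hw
  set S := {t : k | ∃ v : k × k, v ≠ 0 ∧
    eval ![t, 1, v.1, v.2] δ₁ = 0 ∧ eval ![t, 1, v.1, v.2] δ₂ = 0}
  have hS : S.Finite := finite_of_forall_exists_eq_smul (fun i => (z i).1)
    fun t ⟨v, hv, h₁, h₂⟩ => by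
      obtain ⟨i, ⟨c, -, hc⟩, -⟩ := hz_all ((t, 1), v) (by simp) hv h₁ h₂
      exact ⟨i, c, hc⟩
  have hP₃0 : P₃ = 0 := eq_zero_of_uDegree_zero hP₃ (fun i => (z i).2) hz_v_distinct
    (by rw [Fintype.card_fin]; norm_num) fun i => ⟨(z i).1, by
      simpa [(hz_zero i).1, (hz_zero i).2, hδ₃_ne i] using
        congrArg (eval ![(z i).1.1, (z i).1.2, (z i).2.1, (z i).2.2]) hrel⟩
  have hP₂0 : P₂ = 0 := by
    obtain ⟨T, hTS, hT⟩ := hS.infinite_compl.exists_subset_card_eq 4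
    refine eq_zero_of_vDegree_zero hP₂ (fun t : T => ((t : k), 1))
      (fun s t hst => by simpa using Subtype.val_injective.ne hst) (by simp [hT]) fun t => ?_
    obtain ⟨v, hv, hδ₁v⟩ :=
      (isHomogeneous_vFiber hδ₁ ((t : k), 1)).exists_eval_eq_zero three_ne_zero
    rw [eval_vFiber] at hδ₁v
    have hδ₂v : eval ![(t : k), 1, v.1, v.2] δ₂ ≠ 0 := fun hδ₂v => hTS t.2 ⟨v, hv, hδ₁v, hδ₂v⟩
    refine ⟨v, ?_⟩
    simpa [hP₃0, hδ₁v, hδ₂v] using congrArg (eval ![(t : k), 1, v.1, v.2]) hrel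
  have hδ₁0 : δ₁ ≠ 0 := by
    rintro rfl
    refine Set.infinite_univ.mono (fun t _ => ?_) hS
    obtain ⟨v, hv, hδ₂v⟩ := (isHomogeneous_vFiber hδ₂ (t, 1)).exists_eval_eq_zero three_ne_zero
    exact ⟨v, hv, map_zero _, by rwa [eval_vFiber] at hδ₂v⟩
  simp only [hP₂0, hP₃0, zero_mul, add_zero, mul_eq_zero, hδ₁0, or_false] at hrel
  exact ⟨hrel, hP₂0, hP₃0⟩

/-- Let `δ₁, δ₂` be bihomogeneous of bidegree `(2,3)` and `δ₃` of
bidegree `(4,1)` in `k[u₀,u₁,v₀,v₁]`, `k` algebraically closed (bihomogeneity is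
weighted homogeneity for the weights `u ↦ (1,0)`, `v ↦ (0,1)`).  Suppose the common
zeros of `δ₁, δ₂` in `ℙ¹ × ℙ¹` are exactly 12 points `z 0, …, z 11`, pairwise
distinct with pairwise distinct (non-proportional) second coordinates `(v₀ : v₁)`,
and `δ₃` vanishes at none of them.  If `P₁, P₂` are bihomogeneous of bidegree `(2,0)`,
`P₃ of bidegree `(0,2)`, and `P₁δ₁ + P₂δ₂ + P₃δ₃ = 0`, then `P₁ = P₂ = P₃ = 0`. -/
theorem stmt15 {k : Type*} [Field k] [IsAlgClosed k]
    (w : Fin 4 → ℕ × ℕ) (hw : w = ![(1,0), (1,0), (0,1), (0,1)])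
    (δ₁ δ₂ δ₃ : MvPolynomial (Fin 4) k)
    (hδ₁ : δ₁.IsWeightedHomogeneous w (2,3))
    (hδ₂ : δ₂.IsWeightedHomogeneous w (2,3))
    (hδ₃ : δ₃.IsWeightedHomogeneous w (4,1))
    (z : Fin 12 → (k × k) × (k × k))
    (hz_nonzero : ∀ i, (z i).1 ≠ (0, 0) ∧ (z i).2 ≠ (0, 0))
    (hz_zero : ∀ i,
      eval ![(z i).1.1, (z i).1.2, (z i).2.1, (z i).2.2] δ₁ = 0 ∧
      eval ![(z i).1.1, (z i).1.2, (z i).2.1, (z i).2.2] δ₂ = 0)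
    (hz_v_distinct : ∀ i j, i ≠ j →
      (z i).2.1 * (z j).2.2 ≠ (z j).2.1 * (z i).2.2)
    (hz_all : ∀ p : (k × k) × (k × k), p.1 ≠ (0, 0) → p.2 ≠ (0, 0) →
      eval ![p.1.1, p.1.2, p.2.1, p.2.2] δ₁ = 0 →
      eval ![p.1.1, p.1.2, p.2.1, p.2.2] δ₂ = 0 →
      ∃ i, (∃ c : k, c ≠ 0 ∧ p.1 = c • (z i).1) ∧ ∃ d : k, d ≠ 0 ∧ p.2 = d • (z i).2)
    (hδ₃_ne : ∀ i, eval ![(z i).1.1, (z i).1.2, (z i).2.1, (z i).2.2] δ₃ ≠ 0)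
    (P₁ P₂ P₃ : MvPolynomial (Fin 4) k)
    (hP₁ : P₁.IsWeightedHomogeneous w (2,0))
    (hP₂ : P₂.IsWeightedHomogeneous w (2,0))
    (hP₃ : P₃.IsWeightedHomogeneous w (0,2))
    (hrel : P₁ * δ₁ + P₂ * δ₂ + P₃ * δ₃ = 0) :
    P₁ = 0 ∧ P₂ = 0 ∧ P₃ = 0 :=
  stmt15_general w hw δ₁ δ₂ δ₃ hδ₁ hδ₂ z hz_zero hz_v_distinct hz_all hδ₃_ne P₁ P₂ P₃ hP₂ hP₃ hrel
end
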